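/- Let 0 < β < 2 and n₁,n₂,n₃ ∈ ℤ. Set W_k = I_{|k|}(β) I_{|k+n₁|}(β) I_{|k+n₁+n₂|}(β) I_{|k+n₁+n₂+n₃|}(β), and A = Σ_{k∈ℤ} W_k (which converges). Suppose k₋ ≤ 0 ≤ k₊ are integers such that k, k+n₁, k+n₁+n₂, k+n₁+n₂+n₃ are all ≥ 0 when k = k₊ and all ≤ 0 when k = k₋. Then Σ_{k=k₋}^{k₊} W_k ≤ A ≤ Σ_{k=k₋}^{k₊} W_k + ((β/2)⁴ / (1 − (β/2)⁴)) (W_{k₊} + W_{k₋}). -/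

import Mathlib

/-- Modified Bessel function of the first kind of nonnegative integer order. -/
noncomputable def besselI (n : ℕ) (β : ℝ) : ℝ :=
  ∑' m : ℕ, (β / 2) ^ (n + 2 * m) / (Nat.factorial m * Nat.factorial (m + n))

/-- Extension to integer order via I_{−n} = I_n. -/
noncomputable def besselIZ (k : ℤ) (β : ℝ) : ℝ := besselI k.natAbs β

lemma besselI_summable (n : ℕ) {β : ℝ} (hβ : 0 < β) :
    Summable (fun m : ℕ => (β / 2) ^ (n + 2 * m) / (Nat.factorial m * Nat.factorial (m + n))) := by
  have hb : 0 < β / 2 := by linarith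
  refine Summable.of_nonneg_of_le (f := fun m : ℕ => (β/2)^n * (((β/2)^2)^m / (Nat.factorial m)))
    (fun m => by positivity) (fun m => ?_)
    ((Real.summable_pow_div_factorial ((β/2)^2)).mul_left _)
  have h1 : (β/2) ^ (n + 2*m) = (β/2)^n * ((β/2)^2)^m := by
    rw [← pow_mul, ← pow_add]
  rw [h1, mul_div_assoc]
  apply mul_le_mul_of_nonneg_left _ (by positivity)
  gcongr
  exact_mod_cast Nat.le_mul_of_pos_right _ (Nat.factorial_pos _)

lemma besselI_pos (n : ℕ) {β : ℝ} (hβ : 0 < β) : 0 < besselI n β := by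
  have hs := besselI_summable n hβ
  have h0 : (0:ℝ) < (β/2)^(n + 2*0) / (Nat.factorial 0 * Nat.factorial (0+n)) := by positivity
  exact lt_of_lt_of_le h0 (Summable.le_tsum hs 0 (fun j _ => by positivity))

lemma besselI_succ_le (n : ℕ) {β : ℝ} (hβ : 0 < β) :
    besselI (n+1) β ≤ (β/2) * besselI n β := by
  rw [besselI, besselI, ← tsum_mul_left]
  refine Summable.tsum_le_tsum (fun m => ?_) (besselI_summable (n+1) hβ)
    ((besselI_summable n hβ).mul_left _)
  have h1 : (β/2)^(n+1+2*m) = (β/2) * (β/2)^(n+2*m) := by ring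
  rw [h1, mul_div_assoc]
  apply mul_le_mul_of_nonneg_left _ (by positivity)
  gcongr
  omega

lemma besselIZ_pos (k : ℤ) {β : ℝ} (hβ : 0 < β) : 0 < besselIZ k β := besselI_pos _ hβ

lemma besselIZ_succ_le {k : ℤ} (hk : 0 ≤ k) {β : ℝ} (hβ : 0 < β) :
    besselIZ (k+1) β ≤ (β/2) * besselIZ k β := by
  have h : (k+1).natAbs = k.natAbs + 1 := by omega
  rw [besselIZ, h]
  exact besselI_succ_le _ hβ

lemma besselIZ_pred_le {k : ℤ} (hk : k ≤ 0) {β : ℝ} (hβ : 0 < β) :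
    besselIZ (k-1) β ≤ (β/2) * besselIZ k β := by
  have h : (k-1).natAbs = k.natAbs + 1 := by omega
  rw [besselIZ, h]
  exact besselI_succ_le _ hβ

lemma mul4_le {a₁ a₂ a₃ a₄ b₁ b₂ b₃ b₄ c : ℝ}
    (h₁ : a₁ ≤ c*b₁) (h₂ : a₂ ≤ c*b₂) (h₃ : a₃ ≤ c*b₃) (h₄ : a₄ ≤ c*b₄)
    (p₁ : 0 ≤ a₁) (p₂ : 0 ≤ a₂) (p₃ : 0 ≤ a₃) (p₄ : 0 ≤ a₄) :
    a₁*a₂*a₃*a₄ ≤ c^4*(b₁*b₂*b₃*b₄) := by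
  have q₁ : 0 ≤ c*b₁ := p₁.trans h₁
  have q₂ : 0 ≤ c*b₂ := p₂.trans h₂
  have q₃ : 0 ≤ c*b₃ := p₃.trans h₃
  have e12 : a₁*a₂ ≤ (c*b₁)*(c*b₂) := mul_le_mul h₁ h₂ p₂ q₁
  have e123 : a₁*a₂*a₃ ≤ (c*b₁)*(c*b₂)*(c*b₃) :=
    mul_le_mul e12 h₃ p₃ (mul_nonneg q₁ q₂)
  have e : a₁*a₂*a₃*a₄ ≤ (c*b₁)*(c*b₂)*(c*b₃)*(c*b₄) :=
    mul_le_mul e123 h₄ p₄ (mul_nonneg (mul_nonneg q₁ q₂) q₃)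
  calc a₁*a₂*a₃*a₄ ≤ (c*b₁)*(c*b₂)*(c*b₃)*(c*b₄) := e
    _ = c^4*(b₁*b₂*b₃*b₄) := by ring

/-- Two-sided bound on the XY tensor element A = Σ_k W_k by a finite sum plus
geometric tails. -/
theorem stmt11 (β : ℝ) (h0 : 0 < β) (h2 : β < 2) (n₁ n₂ n₃ : ℤ)
    (W : ℤ → ℝ)
    (hW : ∀ k, W k = besselIZ k β * besselIZ (k + n₁) β *
      besselIZ (k + n₁ + n₂) β * besselIZ (k + n₁ + n₂ + n₃) β)
    (km kp : ℤ) (hkm : km ≤ 0) (hkp : 0 ≤ kp)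
    (hpos : 0 ≤ kp ∧ 0 ≤ kp + n₁ ∧ 0 ≤ kp + n₁ + n₂ ∧ 0 ≤ kp + n₁ + n₂ + n₃)
    (hneg : km ≤ 0 ∧ km + n₁ ≤ 0 ∧ km + n₁ + n₂ ≤ 0 ∧ km + n₁ + n₂ + n₃ ≤ 0) :
    Summable W ∧
      (∑ k ∈ Finset.Icc km kp, W k) ≤ ∑' k, W k ∧
      (∑' k, W k) ≤ (∑ k ∈ Finset.Icc km kp, W k) +
        ((β / 2) ^ 4 / (1 - (β / 2) ^ 4)) * (W kp + W km) := by
  obtain ⟨hp1, hp2, hp3, hp4⟩ := hpos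
  obtain ⟨hn1, hn2, hn3, hn4⟩ := hneg
  set r : ℝ := (β/2)^4 with hr
  have hb : 0 < β/2 := by linarith
  have hb1 : β/2 < 1 := by linarith
  have hr0 : 0 < r := by positivity
  have hr1 : r < 1 := pow_lt_one₀ hb.le hb1 (by norm_num)
  have hWpos : ∀ k, 0 < W k := by
    intro k
    rw [hW]
    have := besselIZ_pos k h0
    have := besselIZ_pos (k+n₁) h0
    have := besselIZ_pos (k+n₁+n₂) h0
    have := besselIZ_pos (k+n₁+n₂+n₃) h0
    positivity
  -- one-step bounds
  have hstep_p : ∀ k, kp ≤ k → W (k+1) ≤ r * W k := by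
    intro k hk
    rw [hW, hW]
    have hA : besselIZ (k+1) β ≤ (β/2) * besselIZ k β := besselIZ_succ_le (by omega) h0
    have hB : besselIZ (k+1+n₁) β ≤ (β/2) * besselIZ (k+n₁) β := by
      have e : k+1+n₁ = (k+n₁)+1 := by ring
      rw [e]; exact besselIZ_succ_le (by omega) h0
    have hC : besselIZ (k+1+n₁+n₂) β ≤ (β/2) * besselIZ (k+n₁+n₂) β := by
      have e : k+1+n₁+n₂ = (k+n₁+n₂)+1 := by ring
      rw [e]; exact besselIZ_succ_le (by omega) h0
    have hD : besselIZ (k+1+n₁+n₂+n₃) β ≤ (β/2) * besselIZ (k+n₁+n₂+n₃) β := by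
      have e : k+1+n₁+n₂+n₃ = (k+n₁+n₂+n₃)+1 := by ring
      rw [e]; exact besselIZ_succ_le (by omega) h0
    exact mul4_le hA hB hC hD (besselIZ_pos _ h0).le (besselIZ_pos _ h0).le
      (besselIZ_pos _ h0).le (besselIZ_pos _ h0).le
  have hstep_m : ∀ k, k ≤ km → W (k-1) ≤ r * W k := by
    intro k hk
    rw [hW, hW]
    have hA : besselIZ (k-1) β ≤ (β/2) * besselIZ k β := besselIZ_pred_le (by omega) h0
    have hB : besselIZ (k-1+n₁) β ≤ (β/2) * besselIZ (k+n₁) β := by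
      have e : k-1+n₁ = (k+n₁)-1 := by ring
      rw [e]; exact besselIZ_pred_le (by omega) h0
    have hC : besselIZ (k-1+n₁+n₂) β ≤ (β/2) * besselIZ (k+n₁+n₂) β := by
      have e : k-1+n₁+n₂ = (k+n₁+n₂)-1 := by ring
      rw [e]; exact besselIZ_pred_le (by omega) h0
    have hD : besselIZ (k-1+n₁+n₂+n₃) β ≤ (β/2) * besselIZ (k+n₁+n₂+n₃) β := by
      have e : k-1+n₁+n₂+n₃ = (k+n₁+n₂+n₃)-1 := by ring
      rw [e]; exact besselIZ_pred_le (by omega) h0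
    exact mul4_le hA hB hC hD (besselIZ_pos _ h0).le (besselIZ_pos _ h0).le
      (besselIZ_pos _ h0).le (besselIZ_pos _ h0).le
  -- geometric bounds
  have hgeom_p : ∀ j : ℕ, W (kp + j) ≤ r^j * W kp := by
    intro j
    induction j with
    | zero => simp
    | succ j ih =>
      have e : kp + ((j:ℤ)+1) = (kp + j) + 1 := by ring
      calc W (kp + (j+1 : ℕ)) = W ((kp + j) + 1) := by push_cast; rw [e]
        _ ≤ r * W (kp + j) := hstep_p _ (by omega)
        _ ≤ r * (r^j * W kp) := by
            exact mul_le_mul_of_nonneg_left ih hr0.le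
        _ = r^(j+1) * W kp := by ring
  have hgeom_m : ∀ j : ℕ, W (km - j) ≤ r^j * W km := by
    intro j
    induction j with
    | zero => simp
    | succ j ih =>
      have e : km - ((j:ℤ)+1) = (km - j) - 1 := by ring
      calc W (km - (j+1 : ℕ)) = W ((km - j) - 1) := by push_cast; rw [e]
        _ ≤ r * W (km - j) := hstep_m _ (by omega)
        _ ≤ r * (r^j * W km) := mul_le_mul_of_nonneg_left ih hr0.le
        _ = r^(j+1) * W km := by ring
  -- summability
  have hgeo_sum : Summable (fun j : ℕ => r^j) := summable_geometric_of_lt_one hr0.le hr1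
  have hSp : Summable (fun n : ℕ => W n) := by
    rw [← summable_nat_add_iff kp.toNat]
    refine Summable.of_nonneg_of_le (fun n => (hWpos _).le) (fun n => ?_)
      (hgeo_sum.mul_right (W kp))
    have e : ((n + kp.toNat : ℕ) : ℤ) = kp + n := by
      push_cast [Int.toNat_of_nonneg hkp]; ring
    rw [e]
    exact hgeom_p n
  have hSm : Summable (fun n : ℕ => W (-n)) := by
    rw [← summable_nat_add_iff (-km).toNat]
    refine Summable.of_nonneg_of_le (fun n => (hWpos _).le) (fun n => ?_)
      (hgeo_sum.mul_right (W km))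
    have e : (-((n + (-km).toNat : ℕ) : ℤ)) = km - n := by
      push_cast [Int.toNat_of_nonneg (by omega : (0:ℤ) ≤ -km)]; ring
    rw [e]
    exact hgeom_m n
  have hSum : Summable W := Summable.of_nat_of_neg hSp hSm
  refine ⟨hSum, Summable.sum_le_tsum _ (fun k _ => (hWpos k).le) hSum, ?_⟩
  -- upper bound
  have h1r : (0:ℝ) < 1 - r := by linarith
  have htail : ∀ (c : ℤ) (wc : ℝ), 0 < wc →
      (∀ j : ℕ, W c = wc → True) → True := fun _ _ _ _ => trivial
  -- tail bound, right
  have tail_p : ∀ t : Finset ℤ, (∀ k ∈ t, kp < k) → ∑ k ∈ t, W k ≤ r/(1-r) * W kp := by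
    intro t ht
    have hinj : ∀ x ∈ t, ∀ y ∈ t, (x - kp - 1).toNat = (y - kp - 1).toNat → x = y := by
      intro x hx y hy hxy
      have := ht x hx; have := ht y hy
      omega
    calc ∑ k ∈ t, W k ≤ ∑ k ∈ t, r ^ ((k - kp - 1).toNat + 1) * W kp := by
          refine Finset.sum_le_sum (fun k hk => ?_)
          have hk' := ht k hk
          have e1 : kp + ((k - kp).toNat : ℤ) = k := by omega
          have e2 : (k - kp).toNat = (k - kp - 1).toNat + 1 := by omega
          calc W k = W (kp + ((k - kp).toNat : ℤ)) := by rw [e1]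
            _ ≤ r ^ (k - kp).toNat * W kp := hgeom_p _
            _ = r ^ ((k - kp - 1).toNat + 1) * W kp := by rw [e2]
      _ = ∑ j ∈ t.image (fun k => (k - kp - 1).toNat), r ^ (j+1) * W kp := by
          rw [Finset.sum_image hinj]
      _ ≤ ∑' j : ℕ, r ^ (j+1) * W kp := by
          refine Summable.sum_le_tsum _ (fun j _ => mul_nonneg (pow_nonneg hr0.le _) (hWpos _).le) ?_
          have : Summable (fun j : ℕ => r ^ (j+1) * W kp) := by
            refine ((summable_nat_add_iff 1).mpr hgeo_sum).mul_right _
          exact this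
      _ = r/(1-r) * W kp := by
          have e : ∀ j : ℕ, r ^ (j+1) * W kp = (r * W kp) * r^j := by
            intro j; ring
          rw [tsum_congr e, tsum_mul_left, tsum_geometric_of_lt_one hr0.le hr1]
          field_simp
  have tail_m : ∀ t : Finset ℤ, (∀ k ∈ t, k < km) → ∑ k ∈ t, W k ≤ r/(1-r) * W km := by
    intro t ht
    have hinj : ∀ x ∈ t, ∀ y ∈ t, (km - x - 1).toNat = (km - y - 1).toNat → x = y := by
      intro x hx y hy hxy
      have := ht x hx; have := ht y hy
      omega
    calc ∑ k ∈ t, W k ≤ ∑ k ∈ t, r ^ ((km - k - 1).toNat + 1) * W km := by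
          refine Finset.sum_le_sum (fun k hk => ?_)
          have hk' := ht k hk
          have e1 : km - ((km - k).toNat : ℤ) = k := by omega
          have e2 : (km - k).toNat = (km - k - 1).toNat + 1 := by omega
          calc W k = W (km - ((km - k).toNat : ℤ)) := by rw [e1]
            _ ≤ r ^ (km - k).toNat * W km := hgeom_m _
            _ = r ^ ((km - k - 1).toNat + 1) * W km := by rw [e2]
      _ = ∑ j ∈ t.image (fun k => (km - k - 1).toNat), r ^ (j+1) * W km := by
          rw [Finset.sum_image hinj]
      _ ≤ ∑' j : ℕ, r ^ (j+1) * W km := by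
          refine Summable.sum_le_tsum _ (fun j _ => mul_nonneg (pow_nonneg hr0.le _) (hWpos _).le) ?_
          exact ((summable_nat_add_iff 1).mpr hgeo_sum).mul_right _
      _ = r/(1-r) * W km := by
          have e : ∀ j : ℕ, r ^ (j+1) * W km = (r * W km) * r^j := by
            intro j; ring
          rw [tsum_congr e, tsum_mul_left, tsum_geometric_of_lt_one hr0.le hr1]
          field_simp
  refine Summable.tsum_le_of_sum_le hSum (fun s => ?_)
  classical
  have hsplit1 := Finset.sum_filter_add_sum_filter_not s (fun k => kp < k) W
  have hsplit2 := Finset.sum_filter_add_sum_filter_not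
    (s.filter (fun k => ¬ kp < k)) (fun k => k < km) W
  have hb1' : ∑ k ∈ s.filter (fun k => kp < k), W k ≤ r/(1-r) * W kp :=
    tail_p _ (fun k hk => (Finset.mem_filter.mp hk).2)
  have hb2' : ∑ k ∈ (s.filter (fun k => ¬ kp < k)).filter (fun k => k < km), W k
      ≤ r/(1-r) * W km :=
    tail_m _ (fun k hk => (Finset.mem_filter.mp hk).2)
  have hb3' : ∑ k ∈ (s.filter (fun k => ¬ kp < k)).filter (fun k => ¬ k < km), W k
      ≤ ∑ k ∈ Finset.Icc km kp, W k := by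
    refine Finset.sum_le_sum_of_subset_of_nonneg ?_ (fun k _ _ => (hWpos k).le)
    intro k hk
    simp only [Finset.mem_filter] at hk
    simp only [Finset.mem_Icc]
    omega
  have hWkp := (hWpos kp).le
  have hWkm := (hWpos km).le
  have hgoal : r/(1-r) * W kp + r/(1-r) * W km
      = ((β/2)^4 / (1 - (β/2)^4)) * (W kp + W km) := by
    rw [hr]; ring
  linarith [hsplit1, hsplit2, hb1', hb2', hb3']
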